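/- Assume s_r > 0 satisfies lim_{l→∞} (1/l)·log Σ_{σ∈Ψ_l} E_r(σ)^{s_r/(s_r+r)} = 0, and put t_r := s_r/(s_r + r). Then there exists a constant H > 0 such that for every n ≥ 1 and every σ ∈ S_{n,r}: Σ_{ω∈G_1(σ)} E_r(ω)^{t_r} ≤ H · E_r(σ)^{t_r}. -/

import Mathlib

/-! Within one layer `S_{n,r}` the values of `E_r` differ by less than a factor `η̲_r`. If
`ω ∈ G_1(σ)` extends `σ_L` by `u` and `σ_y` by `v`, then `E_r(ω) ≤ E_r(σ) q_v a_u^r`, so both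
`q_v` and `a_u^r` exceed `η̲_r`. As every `q_j` and every `a_{ij}` is `< 1`, this bounds `|u|`
and `|v|`; hence `#G_1(σ)` is bounded independently of `n` and `σ`, while every term of the sum
is at most `(E_r(σ)/η̲_r)^{t_r}`. -/

open Filter MeasureTheory
open scoped BigOperators ENNReal NNReal Topology

namespace LGQ

noncomputable section

/-- The alphabet `G = {(i,j) : 1 ≤ i ≤ n_j, 1 ≤ j ≤ m}`, encoded as a sigma type:
an element is `⟨j, i⟩` with `j : Fin m` (the `y`-coordinate) and `i : Fin (n j)`. -/
abbrev Alph (m : ℕ) (n : Fin m → ℕ) := Σ j : Fin m, Fin (n j)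

/-- A pair `σ = (σ_L, σ_R)` with `σ_L ∈ G^*` and `σ_R ∈ G_y^*`. -/
abbrev Wd (m : ℕ) (n : Fin m → ℕ) := List (Alph m n) × List (Fin m)

variable {m : ℕ} {n : Fin m → ℕ}

/-- `a_ω := ∏ a_{i_h j_h}` along a word `ω ∈ G^*`. -/
def aP (a : Alph m n → ℝ) (w : List (Alph m n)) : ℝ := (w.map a).prod

/-- `b_τ := ∏ b_{j_h}` along a word `τ ∈ G_y^*`. -/
def bP (b : Fin m → ℝ) (τ : List (Fin m)) : ℝ := (τ.map b).prod

/-- `σ_y := (σ_L)_y ∗ σ_R` : the `y`-word of a pair `σ = σ_L ∗ σ_R`. -/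
def sy (σ : Wd m n) : List (Fin m) := σ.1.map Sigma.fst ++ σ.2

/-- `Ψ_l := {σ = σ_L ∗ σ_R : σ_L ∈ G^l, σ_R ∈ G_y^*, b_{(σ_y)^-} ≥ a_{σ_L} > b_{σ_y}}`. -/
def Psi (a : Alph m n → ℝ) (b : Fin m → ℝ) (l : ℕ) : Set (Wd m n) :=
  {σ | σ.1.length = l ∧ 1 ≤ σ.2.length ∧
    aP a σ.1 ≤ bP b (sy σ).dropLast ∧ bP b (sy σ) < aP a σ.1}

/-- `Ψ^* := ⋃_{l ≥ 1} Ψ_l`. -/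
def PsiStar (a : Alph m n → ℝ) (b : Fin m → ℝ) : Set (Wd m n) :=
  {σ | ∃ l, 1 ≤ l ∧ σ ∈ Psi a b l}

/-- `q_j := Σ_{i=1}^{n_j} p_{ij}`. -/
def qf (p : Alph m n → ℝ) (j : Fin m) : ℝ := ∑ i : Fin (n j), p ⟨j, i⟩

/-- `p_{σ_L} := ∏ p_{i_h j_h}`. -/
def pP (p : Alph m n → ℝ) (w : List (Alph m n)) : ℝ := (w.map p).prod

/-- `q_{σ_R} := ∏ q_{j_h}`. -/
def qP (p : Alph m n → ℝ) (τ : List (Fin m)) : ℝ := (τ.map (qf p)).prod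

/-- `E_r(σ) := p_{σ_L} q_{σ_R} a_{σ_L}^r` (note `E_r(θ) = 1`). -/
def Er (a p : Alph m n → ℝ) (r : ℝ) (σ : Wd m n) : ℝ :=
  pP p σ.1 * qP p σ.2 * aP a σ.1 ^ r

/-- `a̲ := min a_{ij}`. -/
def aLo (a : Alph m n → ℝ) : ℝ := ⨅ g, a g

/-- `ā := max a_{ij}`. -/
def aHi (a : Alph m n → ℝ) : ℝ := ⨆ g, a g

/-- `b̲ := min b_j`. -/
def bLo (b : Fin m → ℝ) : ℝ := ⨅ j, b j

/-- `b̄ := max b_j`. -/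
def bHi (b : Fin m → ℝ) : ℝ := ⨆ j, b j

/-- `p̲ := min p_{ij}`. -/
def pLo (p : Alph m n → ℝ) : ℝ := ⨅ g, p g

/-- `q̲ := min q_j`. -/
def qLo (p : Alph m n → ℝ) : ℝ := ⨅ j, qf p j

/-- `A_1 := ⌊log a̲ / log b̄⌋ + 1`. -/
def A1 (a : Alph m n → ℝ) (b : Fin m → ℝ) : ℤ :=
  ⌊Real.log (aLo a) / Real.log (bHi b)⌋ + 1

/-- `A_2 := ⌊log b̲ / log ā⌋ + 1`. -/
def A2 (a : Alph m n → ℝ) (b : Fin m → ℝ) : ℤ :=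
  ⌊Real.log (bLo b) / Real.log (aHi a)⌋ + 1

/-- `A_3 := max_{(i,j)∈G} a_{ij}/b_j`. -/
def A3 (a : Alph m n → ℝ) (b : Fin m → ℝ) : ℝ := ⨆ g : Alph m n, a g / b g.1

/-- `A_4 := log A_3 / log b̲`. -/
def A4 (a : Alph m n → ℝ) (b : Fin m → ℝ) : ℝ := Real.log (A3 a b) / Real.log (bLo b)

/-- `A_6 := ⌊1/A_4⌋`. -/
def A6 (a : Alph m n → ℝ) (b : Fin m → ℝ) : ℤ := ⌊1 / A4 a b⌋

/-- `η̲_r := p̲ q̲^{A_1} a̲^r`. -/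
def etaLo (a : Alph m n → ℝ) (b : Fin m → ℝ) (p : Alph m n → ℝ) (r : ℝ) : ℝ :=
  pLo p * qLo p ^ A1 a b * aLo a ^ r

/-- `A_{5,r} := ⌊log(q̲² η̲_r)/(r·log ā)⌋`. -/
def A5 (a : Alph m n → ℝ) (b : Fin m → ℝ) (p : Alph m n → ℝ) (r : ℝ) : ℤ :=
  ⌊Real.log (qLo p ^ 2 * etaLo a b p r) / (r * Real.log (aHi a))⌋

/-- `T_{1,r} := ⌊(A_1 + A_{5,r} + 3)/A_4⌋`. -/
def T1 (a : Alph m n → ℝ) (b : Fin m → ℝ) (p : Alph m n → ℝ) (r : ℝ) : ℤ :=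
  ⌊((A1 a b + A5 a b p r + 3 : ℤ) : ℝ) / A4 a b⌋

/-- `ρ = σ^♭`:  for `σ ∈ Ψ_1`, `σ^♭ = θ`; for `σ ∈ Ψ_l` with `l ≥ 2`, `σ^♭` is the unique
`ρ ∈ Ψ_{l-1}` with `ρ_L = (σ_L)^-` and `ρ_y` an initial segment of `σ_y`. -/
def IsFlat (a : Alph m n → ℝ) (b : Fin m → ℝ) (σ ρ : Wd m n) : Prop :=
  (σ.1.length = 1 ∧ ρ = (([], []) : Wd m n)) ∨
  (2 ≤ σ.1.length ∧ ρ ∈ Psi a b (σ.1.length - 1) ∧ ρ.1 = σ.1.dropLast ∧ sy ρ <+: sy σ)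

/-- `Λ_{n,r} := {σ ∈ Ψ^* : E_r(σ^♭) ≥ η̲_r^n > E_r(σ)}`. -/
def Lam (a : Alph m n → ℝ) (b : Fin m → ℝ) (p : Alph m n → ℝ) (r : ℝ) (N : ℕ) :
    Set (Wd m n) :=
  {σ | σ ∈ PsiStar a b ∧ ∃ ρ : Wd m n, IsFlat a b σ ρ ∧
    etaLo a b p r ^ N ≤ Er a p r ρ ∧ Er a p r σ < etaLo a b p r ^ N}

/-- `S_{n,r} := {σ ∈ Ψ^* : η̲_r^{n+1} ≤ E_r(σ) < η̲_r^n}`. -/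
def Snr (a : Alph m n → ℝ) (b : Fin m → ℝ) (p : Alph m n → ℝ) (r : ℝ) (N : ℕ) :
    Set (Wd m n) :=
  {σ | σ ∈ PsiStar a b ∧ etaLo a b p r ^ (N + 1) ≤ Er a p r σ ∧
    Er a p r σ < etaLo a b p r ^ N}

/-- `G_1(σ) := {ω ∈ S_{n,r} : σ_L ⪯ ω_L and σ_y ⪯ ω_y}`. -/
def G1 (a : Alph m n → ℝ) (b : Fin m → ℝ) (p : Alph m n → ℝ) (r : ℝ) (N : ℕ)
    (σ : Wd m n) : Set (Wd m n) :=
  {ω | ω ∈ Snr a b p r N ∧ σ.1 <+: ω.1 ∧ sy σ <+: sy ω}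

/-- `Λ_h(σ) := {ρ ∈ Φ_{l+h} : σ ⪯ ρ}` (componentwise order on pairs). -/
def LamH (a : Alph m n → ℝ) (b : Fin m → ℝ) (σ : Wd m n) (h : ℕ) : Set (Wd m n) :=
  {ρ | ρ ∈ Psi a b (σ.1.length + h) ∧ σ.1 <+: ρ.1 ∧ σ.2 <+: ρ.2}

/-- `I_{k,r}(t) := Σ_{ω∈Φ_k} E_r(ω)^t`. -/
def Ih (a : Alph m n → ℝ) (b : Fin m → ℝ) (p : Alph m n → ℝ) (r : ℝ) (k : ℕ) (t : ℝ) : ℝ :=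
  ∑' ω : Psi a b k, Er a p r ω.1 ^ t

/-- `Υ_n(t,s) := Σ_{σ∈Ψ_n} (p_{σ_L} q_{σ_R})^t a_{σ_L}^s`. -/
def Ups (a : Alph m n → ℝ) (b : Fin m → ℝ) (p : Alph m n → ℝ) (N : ℕ) (t s : ℝ) : ℝ :=
  ∑' σ : Psi a b N, (pP p σ.1.1 * qP p σ.1.2) ^ t * aP a σ.1.1 ^ s

/-- `τ_0 := ((1,j_0),(n_{j_0},j_0))`. -/
def tau0 (j0 : Fin m) (h : 2 ≤ n j0) : List (Alph m n) :=
  [⟨j0, ⟨0, by omega⟩⟩, ⟨j0, ⟨n j0 - 1, by omega⟩⟩]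

/-- `σ̄` is a bar-extension of `σ ∈ Ψ_l`: `σ̄ ∈ Ψ_{l+2}`, `σ̄_L = σ_L ∗ τ_0`, `σ_R ⪯ σ̄_R`. -/
def BarExt (a : Alph m n → ℝ) (b : Fin m → ℝ) (j0 : Fin m) (h : 2 ≤ n j0)
    (σ σb : Wd m n) : Prop :=
  σb ∈ Psi a b (σ.1.length + 2) ∧ σb.1 = σ.1 ++ tau0 j0 h ∧ σ.2 <+: σb.2

/-- cylinder set `[σ] ⊆ Φ_∞ = G^ℕ × G_y^ℕ`. -/
def Cyl (σ : Wd m n) : Set ((ℕ → Alph m n) × (ℕ → Fin m)) :=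
  {x | (∀ i : ℕ, ∀ hi : i < σ.1.length, x.1 i = σ.1.get ⟨i, hi⟩) ∧
       (∀ i : ℕ, ∀ hi : i < σ.2.length, x.2 i = σ.2.get ⟨i, hi⟩)}

/-- the affine map `f_{ij}(x,y) = (a_{ij} x + c_{ij}, b_j y + d_j)`. -/
def fmap (a : Alph m n → ℝ) (b : Fin m → ℝ) (c : Alph m n → ℝ) (d : Fin m → ℝ)
    (g : Alph m n) : ℝ × ℝ → ℝ × ℝ :=
  fun x => (a g * x.1 + c g, b g.1 * x.2 + d g.1)

/-- `A_{L,σ} = c_{i_1j_1} + Σ_{p≥2} (∏_{h<p} a_{i_hj_h}) c_{i_pj_p}`. -/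
def xL (a c : Alph m n → ℝ) : List (Alph m n) → ℝ
  | [] => 0
  | g :: w => c g + a g * xL a c w

/-- `B_{L,σ} = d_{j_1} + Σ_{p≥2} (∏_{h<p} b_{j_h}) d_{j_p}`. -/
def yL (b d : Fin m → ℝ) : List (Fin m) → ℝ
  | [] => 0
  | j :: τ => d j + b j * yL b d τ

/-- the approximate square `F_σ = [A_{L,σ}, A_{L,σ}+a_{σ_L}] × [B_{L,σ}, B_{L,σ}+b_{σ_y}]`. -/
def Fsq (a c : Alph m n → ℝ) (b d : Fin m → ℝ) (σ : Wd m n) : Set (ℝ × ℝ) :=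
  Set.Icc (xL a c σ.1) (xL a c σ.1 + aP a σ.1) ×ˢ
    Set.Icc (yL b d (sy σ)) (yL b d (sy σ) + bP b (sy σ))

/-- the Euclidean distance on `ℝ²`. -/
def eudist (x y : ℝ × ℝ) : ℝ := Real.sqrt ((x.1 - y.1) ^ 2 + (x.2 - y.2) ^ 2)

/-- the horizontal distance `d_h(S,T) = inf{|x-x'| : (x,y)∈S, (x',y')∈T}`. -/
def dH (S T : Set (ℝ × ℝ)) : ℝ := sInf {e | ∃ x ∈ S, ∃ y ∈ T, e = |x.1 - y.1|}

/-- the (Euclidean) diameter of a subset of `ℝ²`. -/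
def euDiam (S : Set (ℝ × ℝ)) : ℝ := sSup {e | ∃ x ∈ S, ∃ y ∈ S, e = eudist x y}

/-- the `N`-th quantization error of order `r`. -/
def qerr (μ : Measure (ℝ × ℝ)) (r : ℝ) (N : ℕ) : ℝ :=
  sInf {e : ℝ | ∃ α : Finset (ℝ × ℝ), ∃ hα : α.Nonempty, α.card ≤ N ∧
    e = (∫ x, α.inf' hα (fun y => eudist x y ^ r) ∂μ) ^ (1 / r)}

/-- the topological support of a measure on `ℝ²`. -/
def suppSet (μ : Measure (ℝ × ℝ)) : Set (ℝ × ℝ) :=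
  {x | ∀ U : Set (ℝ × ℝ), IsOpen U → x ∈ U → μ U ≠ 0}

/-- the dyadic square `[k 2^{-N}, (k+1) 2^{-N}) × [k' 2^{-N}, (k'+1) 2^{-N})`. -/
def Dy (N : ℕ) (k : ℤ × ℤ) : Set (ℝ × ℝ) :=
  Set.Ico ((k.1 : ℝ) * (2 : ℝ) ^ (-(N : ℤ))) (((k.1 : ℝ) + 1) * (2 : ℝ) ^ (-(N : ℤ))) ×ˢ
    Set.Ico ((k.2 : ℝ) * (2 : ℝ) ^ (-(N : ℤ))) (((k.2 : ℝ) + 1) * (2 : ℝ) ^ (-(N : ℤ)))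

theorem prod_map_le_pow_length {α : Type*} {f : α → ℝ} {c : ℝ} (hf0 : ∀ x, 0 ≤ f x)
    (hfc : ∀ x, f x ≤ c) (w : List α) : (w.map f).prod ≤ c ^ w.length := by
  simpa [List.map_const', List.prod_replicate] using
    List.prod_map_le_prod_map₀ f (fun _ => c) (fun x _ => hf0 x) (fun x _ => hfc x)

theorem finite_setOf_lt_prod_map {α : Type*} [Finite α] {f : α → ℝ} (hf0 : ∀ x, 0 ≤ f x)
    (hf1 : ∀ x, f x < 1) {ε : ℝ} (hε : 0 < ε) : {w : List α | ε < (w.map f).prod}.Finite := by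
  obtain ⟨c, hc0, hc1, hfc⟩ : ∃ c, 0 ≤ c ∧ c < 1 ∧ ∀ x, f x ≤ c := by
    rcases isEmpty_or_nonempty α with _ | _
    · exact ⟨0, le_rfl, one_pos, isEmptyElim⟩
    · obtain ⟨x₀, hx₀⟩ := Finite.exists_max f
      exact ⟨f x₀, hf0 x₀, hf1 x₀, hx₀⟩
  obtain ⟨K, hK⟩ := exists_pow_lt_of_lt_one hε hc1
  refine (List.finite_length_lt α K).subset fun w hw => ?_
  show w.length < K
  by_contra! hlen
  have hcK : c ^ w.length ≤ c ^ K := pow_le_pow_of_le_one hc0 hc1.le hlen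
  exact (hw.trans_le ((prod_map_le_pow_length hf0 hfc w).trans hcK)).not_gt hK

theorem tsum_le_ncard_mul {α : Type*} {s : Set α} (hs : s.Finite) {f : α → ℝ} {B : ℝ}
    (hf : ∀ x ∈ s, f x ≤ B) : ∑' x : s, f x ≤ s.ncard * B := by
  have := hs.fintype
  rw [tsum_fintype, ← Nat.card_coe_set_eq, Nat.card_eq_fintype_card, ← nsmul_eq_mul]
  exact Finset.sum_le_card_nsmul _ _ _ fun x _ => hf x x.2

section

variable {a p : Alph m n → ℝ} {b : Fin m → ℝ} {r : ℝ}

@[simp] theorem aP_append (w₁ w₂ : List (Alph m n)) : aP a (w₁ ++ w₂) = aP a w₁ * aP a w₂ := by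
  simp [aP]

@[simp] theorem pP_append (w₁ w₂ : List (Alph m n)) : pP p (w₁ ++ w₂) = pP p w₁ * pP p w₂ := by
  simp [pP]

@[simp] theorem qP_append (τ₁ τ₂ : List (Fin m)) : qP p (τ₁ ++ τ₂) = qP p τ₁ * qP p τ₂ := by
  simp [qP]

theorem aP_nonneg (ha : ∀ g, 0 ≤ a g) (w : List (Alph m n)) : 0 ≤ aP a w :=
  List.prod_nonneg (List.forall_mem_map.2 fun g _ => ha g)

theorem pP_nonneg (hp : ∀ g, 0 ≤ p g) (w : List (Alph m n)) : 0 ≤ pP p w :=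
  List.prod_nonneg (List.forall_mem_map.2 fun g _ => hp g)

theorem qf_nonneg (hp : ∀ g, 0 ≤ p g) (j : Fin m) : 0 ≤ qf p j :=
  Finset.sum_nonneg fun _ _ => hp _

theorem qf_pos (hn : ∀ j, 1 ≤ n j) (hp : ∀ g, 0 < p g) (j : Fin m) : 0 < qf p j :=
  Finset.sum_pos (fun _ _ => hp _) ⟨⟨0, hn j⟩, Finset.mem_univ _⟩

theorem qP_nonneg (hp : ∀ g, 0 ≤ p g) (τ : List (Fin m)) : 0 ≤ qP p τ :=
  List.prod_nonneg (List.forall_mem_map.2 fun j _ => qf_nonneg hp j)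

theorem sum_qf (hp1 : ∑ g, p g = 1) : ∑ j, qf p j = 1 := by
  rw [← hp1, ← Finset.univ_sigma_univ, Finset.sum_sigma]
  rfl

theorem qf_lt_one (hm : 2 ≤ m) (hn : ∀ j, 1 ≤ n j) (hp : ∀ g, 0 < p g)
    (hp1 : ∑ g, p g = 1) (j : Fin m) : qf p j < 1 := by
  have : Nontrivial (Fin m) := Fin.nontrivial_iff_two_le.mpr hm
  obtain ⟨j', hj'⟩ := exists_ne j
  rw [← sum_qf hp1]
  exact Finset.single_lt_sum hj' (Finset.mem_univ j) (Finset.mem_univ j') (qf_pos hn hp j')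
    fun k _ _ => (qf_pos hn hp k).le

theorem pP_le_qP_map_fst (hp : ∀ g, 0 ≤ p g) (w : List (Alph m n)) :
    pP p w ≤ qP p (w.map Sigma.fst) := by
  have hpq : ∀ g : Alph m n, p g ≤ qf p g.1 := fun g =>
    Finset.single_le_sum (f := fun i => p ⟨g.1, i⟩) (fun _ _ => hp _) (Finset.mem_univ g.2)
  simpa [pP, qP, List.map_map] using
    List.prod_map_le_prod_map₀ p (qf p ∘ Sigma.fst) (fun g _ => hp g) (fun g _ => hpq g)

theorem etaLo_pos (hm : 0 < m) (hn : ∀ j, 1 ≤ n j) (ha : ∀ g, 0 < a g) (hp : ∀ g, 0 < p g) :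
    0 < etaLo a b p r := by
  have : Nonempty (Fin m) := ⟨⟨0, hm⟩⟩
  have : Nonempty (Alph m n) := ⟨⟨⟨0, hm⟩, ⟨0, hn _⟩⟩⟩
  obtain ⟨g, hpg⟩ := exists_eq_ciInf_of_finite (f := p)
  obtain ⟨j, hqj⟩ := exists_eq_ciInf_of_finite (f := qf p)
  obtain ⟨g', hag'⟩ := exists_eq_ciInf_of_finite (f := a)
  have hpLo : 0 < pLo p := by rw [pLo, ← hpg]; exact hp g
  have hqLo : 0 < qLo p := by rw [qLo, ← hqj]; exact qf_pos hn hp j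
  have haLo : 0 < aLo a := by rw [aLo, ← hag']; exact ha g'
  unfold etaLo
  positivity

theorem Er_pos_of_mem_Snr (hη : 0 < etaLo a b p r) {N : ℕ} {σ : Wd m n}
    (hσ : σ ∈ Snr a b p r N) : 0 < Er a p r σ :=
  (pow_pos hη _).trans_le hσ.2.1

theorem etaLo_mul_Er_lt_of_mem_Snr (hη : 0 < etaLo a b p r) {N : ℕ} {σ ω : Wd m n}
    (hσ : σ ∈ Snr a b p r N) (hω : ω ∈ Snr a b p r N) :
    etaLo a b p r * Er a p r σ < Er a p r ω :=
  calc etaLo a b p r * Er a p r σ < etaLo a b p r * etaLo a b p r ^ N :=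
        mul_lt_mul_of_pos_left hσ.2.2 hη
    _ = etaLo a b p r ^ (N + 1) := (pow_succ' _ _).symm
    _ ≤ Er a p r ω := hω.2.1

/-- The weights `p` of the new letters of `ω_L` are dominated by the `q` of their `y`-letters. -/
theorem Er_le_mul_of_eq_append (ha : ∀ g, 0 ≤ a g) (hp : ∀ g, 0 ≤ p g) {σ ω : Wd m n}
    {u : List (Alph m n)} {v : List (Fin m)} (hu : ω.1 = σ.1 ++ u) (hv : sy ω = sy σ ++ v) :
    Er a p r ω ≤ Er a p r σ * (qP p v * aP a u ^ r) := by
  have hy : u.map Sigma.fst ++ ω.2 = σ.2 ++ v := by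
    apply List.append_cancel_left (as := σ.1.map Sigma.fst)
    simpa [sy, hu] using hv
  have hq : qP p (u.map Sigma.fst) * qP p ω.2 = qP p σ.2 * qP p v := by
    rw [← qP_append, ← qP_append, hy]
  have hcoef : 0 ≤ pP p σ.1 * aP a σ.1 ^ r * aP a u ^ r := by
    have := aP_nonneg ha σ.1
    have := aP_nonneg ha u
    have := pP_nonneg hp σ.1
    positivity
  calc Er a p r ω = pP p σ.1 * aP a σ.1 ^ r * aP a u ^ r * (pP p u * qP p ω.2) := by
        rw [Er, hu, pP_append, aP_append, Real.mul_rpow (aP_nonneg ha _) (aP_nonneg ha _)]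
        ring
    _ ≤ pP p σ.1 * aP a σ.1 ^ r * aP a u ^ r * (qP p (u.map Sigma.fst) * qP p ω.2) := by
        gcongr
        · exact qP_nonneg hp _
        · exact pP_le_qP_map_fst hp u
    _ = Er a p r σ * (qP p v * aP a u ^ r) := by
        rw [hq, Er]
        ring

theorem etaLo_lt_of_mem_G1 (ha0 : ∀ g, 0 ≤ a g) (ha1 : ∀ g, a g ≤ 1) (hp : ∀ g, 0 ≤ p g)
    (hq1 : ∀ j, qf p j ≤ 1) (hr : 0 ≤ r) (hη : 0 < etaLo a b p r) {N : ℕ} {σ ω : Wd m n}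
    (hσ : σ ∈ Snr a b p r N) (hω : ω ∈ G1 a b p r N σ) :
    etaLo a b p r < aP a (ω.1.drop σ.1.length) ^ r ∧
      etaLo a b p r < qP p ((sy ω).drop (sy σ).length) := by
  set u := ω.1.drop σ.1.length
  set v := (sy ω).drop (sy σ).length
  have hE := (etaLo_mul_Er_lt_of_mem_Snr hη hσ hω.1).trans_le <|
    Er_le_mul_of_eq_append ha0 hp (List.prefix_iff_eq_append.1 hω.2.1).symm
      (List.prefix_iff_eq_append.1 hω.2.2).symm
  have hη_lt : etaLo a b p r < qP p v * aP a u ^ r := by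
    rw [mul_comm (etaLo a b p r)] at hE
    exact lt_of_mul_lt_mul_left hE (Er_pos_of_mem_Snr hη hσ).le
  have hv1 : qP p v ≤ 1 := by
    simpa [qP] using prod_map_le_pow_length (qf_nonneg hp) hq1 v
  have hu1 : aP a u ^ r ≤ 1 :=
    Real.rpow_le_one (aP_nonneg ha0 u) (by simpa [aP] using prod_map_le_pow_length ha0 ha1 u) hr
  constructor
  · nlinarith [qP_nonneg hp v]
  · nlinarith [Real.rpow_nonneg (aP_nonneg ha0 u) r]

theorem exists_forall_ncard_G1_le (hm : 2 ≤ m) (hn : ∀ j, 1 ≤ n j) (ha : ∀ g, 0 < a g)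
    (ha1 : ∀ g, a g < 1) (hp : ∀ g, 0 < p g) (hp1 : ∑ g, p g = 1) (hr : 0 < r) :
    ∃ C : ℕ, ∀ N σ, σ ∈ Snr a b p r N →
      (G1 a b p r N σ).Finite ∧ (G1 a b p r N σ).ncard ≤ C := by
  have ha0 : ∀ g, 0 ≤ a g := fun g => (ha g).le
  have hη : 0 < etaLo a b p r := etaLo_pos (by omega) hn ha hp
  set T := {u : List (Alph m n) | etaLo a b p r < (u.map (a · ^ r)).prod} ×ˢ
    {v : List (Fin m) | etaLo a b p r < qP p v}
  have hT : T.Finite :=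
    (finite_setOf_lt_prod_map (fun g => Real.rpow_nonneg (ha0 g) r)
      (fun g => Real.rpow_lt_one (ha0 g) (ha1 g) hr) hη).prod
    (finite_setOf_lt_prod_map (qf_nonneg fun g => (hp g).le) (qf_lt_one hm hn hp hp1) hη)
  refine ⟨T.ncard, fun N σ hσ => ?_⟩
  set f : Wd m n → Wd m n := fun ω => (ω.1.drop σ.1.length, (sy ω).drop (sy σ).length)
  have hmaps : Set.MapsTo f (G1 a b p r N σ) T := fun ω hω => by
    have := etaLo_lt_of_mem_G1 ha0 (fun g => (ha1 g).le) (fun g => (hp g).le)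
      (fun j => (qf_lt_one hm hn hp hp1 j).le) hr.le hη hσ hω
    rwa [aP, ← Real.list_prod_map_rpow' _ _ (fun g _ => ha0 g)] at this
  have hinj : Set.InjOn f (G1 a b p r N σ) := by
    intro ω hω ω' hω' hf
    obtain ⟨h1, h2⟩ := Prod.mk.inj hf
    have hL : ω.1 = ω'.1 := by
      rw [← List.prefix_iff_eq_append.1 hω.2.1, ← List.prefix_iff_eq_append.1 hω'.2.1, h1]
    have hy : sy ω = sy ω' := by
      rw [← List.prefix_iff_eq_append.1 hω.2.2, ← List.prefix_iff_eq_append.1 hω'.2.2, h2]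
    refine Prod.ext hL ?_
    simpa [sy, hL] using hy
  exact ⟨Set.Finite.of_finite_image (hT.subset hmaps.image_subset) hinj,
    Set.ncard_le_ncard_of_injOn f hmaps hinj hT⟩

end

theorem stmt17_general
    (m : ℕ) (hm : 2 ≤ m) (n : Fin m → ℕ) (hn : ∀ j, 1 ≤ n j)
    (a : Alph m n → ℝ) (b : Fin m → ℝ)
    (hab : ∀ g : Alph m n, 0 < a g ∧ a g < b g.1 ∧ b g.1 < 1)
    (p : Alph m n → ℝ) (hp : ∀ g, 0 < p g) (hp1 : ∑ g : Alph m n, p g = 1)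
    (r : ℝ) (hr : 0 < r)
    (s : ℝ) (hs : 0 < s) :
    ∃ H : ℝ, 0 < H ∧ ∀ N : ℕ, 1 ≤ N → ∀ σ ∈ Snr a b p r N,
      (∑' ω : G1 a b p r N σ, Er a p r ω.1 ^ (s / (s + r))) ≤
        H * Er a p r σ ^ (s / (s + r)) := by
  obtain ⟨C, hC⟩ := exists_forall_ncard_G1_le hm hn (fun g => (hab g).1)
    (fun g => (hab g).2.1.trans (hab g).2.2) hp hp1 hr
  have hη : 0 < etaLo a b p r := etaLo_pos (by omega) hn (fun g => (hab g).1) hp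
  have ht : 0 ≤ s / (s + r) := by positivity
  refine ⟨(C + 1) / etaLo a b p r ^ (s / (s + r)), by positivity, fun N _ σ hσ => ?_⟩
  obtain ⟨hfin, hcard⟩ := hC N σ hσ
  have hEσ := Er_pos_of_mem_Snr hη hσ
  have hEω : ∀ ω ∈ G1 a b p r N σ,
      Er a p r ω ^ (s / (s + r)) ≤ (Er a p r σ / etaLo a b p r) ^ (s / (s + r)) :=
    fun ω hω => Real.rpow_le_rpow (Er_pos_of_mem_Snr hη hω.1).le
      ((le_div_iff₀' hη).2 (etaLo_mul_Er_lt_of_mem_Snr hη hω.1 hσ).le) ht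
  calc ∑' ω : G1 a b p r N σ, Er a p r ω.1 ^ (s / (s + r))
      ≤ (G1 a b p r N σ).ncard * (Er a p r σ / etaLo a b p r) ^ (s / (s + r)) :=
        tsum_le_ncard_mul hfin hEω
    _ ≤ (C + 1) * (Er a p r σ / etaLo a b p r) ^ (s / (s + r)) := by
        gcongr
        exact_mod_cast hcard.trans C.le_succ
    _ = (C + 1) / etaLo a b p r ^ (s / (s + r)) * Er a p r σ ^ (s / (s + r)) := by
        rw [Real.div_rpow hEσ.le hη.le]
        ring

theorem stmt17
    (m : ℕ) (hm : 2 ≤ m) (n : Fin m → ℕ) (hn : ∀ j, 1 ≤ n j)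
    (a : Alph m n → ℝ) (b : Fin m → ℝ)
    (hab : ∀ g : Alph m n, 0 < a g ∧ a g < b g.1 ∧ b g.1 < 1)
    (p : Alph m n → ℝ) (hp : ∀ g, 0 < p g) (hp1 : ∑ g : Alph m n, p g = 1)
    (r : ℝ) (hr : 0 < r)
    (s : ℝ) (hs : 0 < s)
    (hlim : Tendsto
      (fun l : ℕ => Real.log (∑' σ : Psi a b l, Er a p r σ.1 ^ (s / (s + r))) / l)
      atTop (𝓝 0)) :
    ∃ H : ℝ, 0 < H ∧ ∀ N : ℕ, 1 ≤ N → ∀ σ ∈ Snr a b p r N,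
      (∑' ω : G1 a b p r N σ, Er a p r ω.1 ^ (s / (s + r))) ≤
        H * Er a p r σ ^ (s / (s + r)) :=
  stmt17_general m hm n hn a b hab p hp hp1 r hr s hs

end

end LGQ
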